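/- arXiv:1610.02340 — 2 statements merged into one kernel-verified Lean document; each statement's English description precedes it below -/
import Mathlib

section
/- There are infinitely many integers n ≥ 4 such that ∏_{k=4}^{n} ((k(k−3))² − 2) is a perfect square. -/
/-!
Since `(k - 1) * (k - 2) = k * (k - 3) + 2`, each factor splits as
`(k (k - 3))² - 2 = ((k - 1)² - 2) ((k - 2)² - 2)`, so the product telescopes to
`2 ((n - 1)² - 2)` times a square. It is therefore a square as soon as `n - 1 = x` with
`x² - 2 y² = 2`, and this Pell-type equation has infinitely many solutions, generated from
`(10, 7)` by the automorphism `(x, y) ↦ (3x + 4y, 2x + 3y)` of the form `x² - 2y²`.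
-/

open Finset

lemma sq_mul_sub_three_sq_sub_two {R : Type*} [CommRing R] (k : R) :
    (k * (k - 3)) ^ 2 - 2 = ((k - 1) ^ 2 - 2) * ((k - 2) ^ 2 - 2) := by
  ring

lemma prod_Icc_mul_sub_one_sub_two {M : Type*} [CommMonoid M] (f : ℤ → M) {a n : ℤ}
    (hn : a ≤ n) :
    ∏ k ∈ Icc a n, f (k - 1) * f (k - 2) =
      f (a - 2) * f (n - 1) * (∏ j ∈ Icc (a - 1) (n - 2), f j) ^ 2 := by
  induction n, hn using Int.leInduction with
  | base =>
    rw [Icc_self, prod_singleton, Icc_eq_empty (by omega), prod_empty,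
      one_pow, mul_one, mul_comm]
  | succ n hn ih =>
    rw [← insert_Icc_right_eq_Icc_add_one (by omega), prod_insert (by simp), ih,
      show n + 1 - 2 = n - 1 by ring, ← insert_Icc_sub_one_right_eq_Icc (by omega : a - 1 ≤ n - 1),
      prod_insert (by simp), show n + 1 - 1 = n by ring, show n - 1 - 1 = n - 2 by ring,
      mul_pow, sq (f (n - 1))]
    ac_rfl

lemma prod_Icc_sq_mul_sub_three_sq_sub_two {n : ℤ} (hn : 4 ≤ n) :
    ∏ k ∈ Icc 4 n, ((k * (k - 3)) ^ 2 - 2) =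
      2 * ((n - 1) ^ 2 - 2) * (∏ j ∈ Icc 3 (n - 2), (j ^ 2 - 2)) ^ 2 := by
  simp_rw [sq_mul_sub_three_sq_sub_two]
  rw [prod_Icc_mul_sub_one_sub_two (fun j : ℤ => j ^ 2 - 2) hn]
  norm_num

lemma sq_sub_two_mul_sq_step {x y c : ℤ} (h : x ^ 2 - 2 * y ^ 2 = c) :
    (3 * x + 4 * y) ^ 2 - 2 * (2 * x + 3 * y) ^ 2 = c := by
  linear_combination h

lemma exists_le_sq_sub_two_mul_sq_eq_two (N : ℕ) :
    ∃ x y : ℤ, N + 10 ≤ x ∧ 0 ≤ y ∧ x ^ 2 - 2 * y ^ 2 = 2 := by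
  induction N with
  | zero => exact ⟨10, 7, by norm_num, by norm_num, by norm_num⟩
  | succ N ih =>
    obtain ⟨x, y, hx, hy, hxy⟩ := ih
    exact ⟨3 * x + 4 * y, 2 * x + 3 * y, by push_cast; omega, by omega,
      sq_sub_two_mul_sq_step hxy⟩

theorem stmt11 :
    {n : ℤ | 4 ≤ n ∧ ∃ y : ℤ, (∏ k ∈ Finset.Icc 4 n, ((k * (k - 3))^2 - 2)) = y^2}.Infinite := by
  refine Set.infinite_of_forall_exists_gt fun a => ?_
  obtain ⟨x, y, hx, -, hxy⟩ := exists_le_sq_sub_two_mul_sq_eq_two a.toNat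
  refine ⟨x + 1, ⟨by omega, 2 * y * ∏ j ∈ Icc 3 (x + 1 - 2), (j ^ 2 - 2), ?_⟩, by omega⟩
  rw [prod_Icc_sq_mul_sub_three_sq_sub_two (by omega), add_sub_cancel_right,
    show x ^ 2 - 2 = 2 * y ^ 2 by linarith]
  ring
end

section
/- Let a, b, m ∈ ℤ with a + b + 1 = m², f(k) = k² + ak + b, and P(k) = f(k)·f(k+1). Then for every n ≥ 1, ∏_{k=1}^{n} P(k) is a perfect square if and only if f(n+1) is a perfect square (assuming f(k) ≠ 0 for all 1 ≤ k ≤ n+1). -/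
/-!
Each inner factor `f k`, `1 < k ≤ n`, occurs twice in `∏ P k`, so the product telescopes to
`f 1 * f (n + 1) * (∏_{1 < k ≤ n} f k) ^ 2 = f (n + 1) * (m * ∏_{1 < k ≤ n} f k) ^ 2`.
In `ℤ` (indeed in any integrally closed domain), multiplying by a nonzero square neither creates
nor destroys squares.
-/

open Finset

theorem isSquare_mul_sq_iff {R : Type*} [CommRing R] [IsDomain R] [IsIntegrallyClosed R]
    {x c : R} (hc : c ≠ 0) : IsSquare (x * c ^ 2) ↔ IsSquare x := by
  refine ⟨fun hsq => ?_, fun ⟨r, hr⟩ => ⟨r * c, by rw [hr]; ring⟩⟩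
  obtain ⟨y, hy⟩ := (isSquare_iff_exists_sq _).mp hsq
  obtain ⟨z, rfl⟩ : c ∣ y :=
    (IsIntegrallyClosed.pow_dvd_pow_iff two_ne_zero).mp ⟨x, by rw [← hy, mul_comm]⟩
  refine (isSquare_iff_exists_sq _).mpr ⟨z, mul_right_cancel₀ (pow_ne_zero 2 hc) ?_⟩
  rw [hy]
  ring

theorem prod_Icc_mul_apply_add_one {M : Type*} [CommMonoid M] (g : ℤ → M) {a n : ℤ}
    (han : a ≤ n) :
    ∏ k ∈ Icc a n, g k * g (k + 1) = g a * g (n + 1) * (∏ k ∈ Ioc a n, g k) ^ 2 := by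
  induction n, han using Int.leInduction with
  | base => simp
  | succ n han ih =>
    rw [← insert_Icc_right_eq_Icc_add_one (by omega), ← insert_Ioc_right_eq_Ioc_add_one han,
      prod_insert (by simp), prod_insert (by simp), ih, mul_pow, sq (g (n + 1))]
    ac_rfl

theorem stmt17 (a b m : ℤ) (hm : a + b + 1 = m^2)
    (f P : ℤ → ℤ) (hf : ∀ k, f k = k^2 + a*k + b) (hP : ∀ k, P k = f k * f (k + 1))
    (n : ℤ) (hn : 1 ≤ n) (hne : ∀ k, 1 ≤ k → k ≤ n + 1 → f k ≠ 0) :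
    (∃ y : ℤ, (∏ k ∈ Finset.Icc 1 n, P k) = y^2) ↔ ∃ y : ℤ, f (n + 1) = y^2 := by
  have hf1 : f 1 = m ^ 2 := by rw [hf]; linarith
  have hprod : ∏ k ∈ Icc 1 n, P k = f (n + 1) * (m * ∏ k ∈ Ioc 1 n, f k) ^ 2 := by
    simp only [hP, prod_Icc_mul_apply_add_one f hn, hf1]
    ring
  have hm0 : m ≠ 0 := by
    rintro rfl
    exact hne 1 le_rfl (by omega) (by rw [hf1]; ring)
  have hinner0 : ∏ k ∈ Ioc 1 n, f k ≠ 0 := prod_ne_zero_iff.mpr fun k hk =>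
    hne k (mem_Ioc.mp hk).1.le (by linarith [(mem_Ioc.mp hk).2])
  simp only [← isSquare_iff_exists_sq, hprod]
  exact isSquare_mul_sq_iff (mul_ne_zero hm0 hinner0)
end
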